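/- (Multiplicity Bézout-type lemma) Let F be a field, Q(X,Y) ∈ F[X,Y] nonzero with (1,k-1)-weighted degree at most D, p(X) ∈ F[X] of degree at most k-1, and m ≥ 1. Suppose A ⊆ F is a set of points a such that Q has a root of multiplicity at least m at (a, p(a)). If |A| > D/m, then (Y - p(X)) divides Q(X,Y). -/

import Mathlib

/-!
Substituting `Y = p(X)` turns `Q` into a univariate polynomial `q(X) = Q(X, p(X))` of degree at
most `D`, since `deg p ≤ k - 1` is exactly the weight given to `Y`. A root of multiplicity `m` of
`Q` at `(a, p(a))` becomes a root of multiplicity at least `m` of `q` at `a`, because after the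
shift `X ↦ X + a` both `X` and `p(X + a) - p(a)` are divisible by `X`. So `q` has at least
`m · |A| > D` roots counted with multiplicity, forcing `q = 0`; and `Q(X, Y) - Q(X, p(X))` is
always divisible by `Y - p(X)`.
-/

open Polynomial

namespace MvPolynomial

variable {σ R S : Type*} [CommSemiring R]

theorem sub_dvd_aeval_sub_aeval [CommRing S] [Algebra R S] {x y : σ → S} {i : σ}
    (h : ∀ j ≠ i, x j = y j) (Q : MvPolynomial σ R) :
    x i - y i ∣ aeval x Q - aeval y Q := by
  induction Q using MvPolynomial.induction_on with
  | C a => simp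
  | add P Q hP hQ => simpa only [map_add, add_sub_add_comm] using dvd_add hP hQ
  | mul_X P j hP =>
    have hj : x i - y i ∣ x j - y j := by
      by_cases hji : j = i
      · rw [hji]
      · rw [h j hji, sub_self]; exact dvd_zero _
    have hsplit : aeval x (P * X j) - aeval y (P * X j)
        = (aeval x P - aeval y P) * x j + aeval y P * (x j - y j) := by
      simp only [map_mul, aeval_X]; ring
    rw [hsplit]
    exact dvd_add (dvd_mul_of_dvd_left hP _) (dvd_mul_of_dvd_right hj _)

theorem pow_dvd_aeval [CommSemiring S] [Algebra R S] {f : σ → S} {t : S} {m : ℕ}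
    (hf : ∀ i, t ∣ f i) {Q : MvPolynomial σ R} (hQ : ∀ d, d.degree < m → coeff d Q = 0) :
    t ^ m ∣ aeval f Q := by
  rw [aeval_def, eval₂_eq]
  refine Finset.dvd_sum fun d hd => dvd_mul_of_dvd_right ?_ _
  have hm : m ≤ d.degree := not_lt.mp fun h => mem_support_iff.mp hd (hQ d h)
  calc t ^ m ∣ t ^ d.degree := pow_dvd_pow t hm
    _ = ∏ i ∈ d.support, t ^ d i := by rw [Finsupp.degree_apply, Finset.prod_pow_eq_pow_sum]
    _ ∣ ∏ i ∈ d.support, f i ^ d i :=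
        Finset.prod_dvd_prod_of_dvd _ _ fun i _ => pow_dvd_pow_of_dvd (hf i) _

theorem natDegree_aeval_le_weightedTotalDegree {f : σ → R[X]} {w : σ → ℕ}
    (hf : ∀ i, (f i).natDegree ≤ w i) (Q : MvPolynomial σ R) :
    (aeval f Q).natDegree ≤ weightedTotalDegree w Q := by
  rw [aeval_def, eval₂_eq]
  refine natDegree_sum_le_of_forall_le _ _ fun d hd => ?_
  calc (algebraMap R R[X] (coeff d Q) * ∏ i ∈ d.support, f i ^ d i).natDegree
      ≤ ∑ i ∈ d.support, (f i ^ d i).natDegree := by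
        rw [Polynomial.algebraMap_eq]; exact (natDegree_C_mul_le _ _).trans (natDegree_prod_le _ _)
    _ ≤ ∑ i ∈ d.support, d i • w i :=
        Finset.sum_le_sum fun i _ => natDegree_pow_le_of_le _ (hf i)
    _ ≤ weightedTotalDegree w Q := le_weightedTotalDegree w hd

end MvPolynomial

theorem Polynomial.mul_card_le_natDegree {R : Type*} [CommRing R] [IsDomain R] {q : R[X]}
    (hq : q ≠ 0) {A : Finset R} {m : ℕ} (hA : ∀ a ∈ A, (X - C a) ^ m ∣ q) :
    m * A.card ≤ q.natDegree := by
  classical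
  have hle : m • A.val ≤ q.roots := by
    refine Multiset.le_iff_count.mpr fun a => ?_
    rw [Multiset.count_nsmul, count_roots]
    by_cases ha : a ∈ A
    · rw [Multiset.count_eq_one_of_mem A.nodup ha, mul_one]
      exact (le_rootMultiplicity_iff hq).mpr (hA a ha)
    · rw [Multiset.count_eq_zero_of_notMem ha, mul_zero]; exact Nat.zero_le _
  calc m * A.card = Multiset.card (m • A.val) := by simp
    _ ≤ Multiset.card q.roots := Multiset.card_le_card hle
    _ ≤ q.natDegree := card_roots' q

section Bivariate

open MvPolynomial

variable {R : Type*} [CommRing R]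

theorem MvPolynomial.X_one_sub_dvd_of_aeval_eq_zero {Q : MvPolynomial (Fin 2) R} {p : R[X]}
    (h : aeval ![Polynomial.X, p] Q = 0) : X 1 - Polynomial.aeval (X 0) p ∣ Q := by
  have hsubst : (fun i => Polynomial.aeval (X 0) (![Polynomial.X, p] i))
      = ![X 0, Polynomial.aeval (X 0 : MvPolynomial (Fin 2) R) p] := by
    funext i; fin_cases i <;> simp
  have hdvd := sub_dvd_aeval_sub_aeval (R := R) (x := X)
    (y := ![X 0, Polynomial.aeval (X 0 : MvPolynomial (Fin 2) R) p]) (i := 1)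
    (fun j hj => by fin_cases j <;> simp_all) Q
  rwa [← hsubst, ← comp_aeval_apply, h, map_zero, sub_zero, aeval_X_left_apply] at hdvd

theorem MvPolynomial.X_sub_C_pow_dvd_aeval {Q : MvPolynomial (Fin 2) R} {p : R[X]} {a : R}
    {m : ℕ}
    (ha : ∀ d : Fin 2 →₀ ℕ, d 0 + d 1 < m →
      coeff d (aeval ![X 0 + C a, X 1 + C (p.eval a)] Q) = 0) :
    (Polynomial.X - Polynomial.C a) ^ m ∣ aeval ![Polynomial.X, p] Q := by
  have hshift :
      aeval ![Polynomial.X, p.comp (Polynomial.X + Polynomial.C a) - Polynomial.C (p.eval a)]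
        (aeval ![X 0 + C a, X 1 + C (p.eval a)] Q)
      = Polynomial.aeval (Polynomial.X + Polynomial.C a) (aeval ![Polynomial.X, p] Q) := by
    rw [comp_aeval_apply, comp_aeval_apply]
    congr 2; funext i; fin_cases i <;> simp [Polynomial.comp_eq_aeval]
  have hX : Polynomial.X ^ m
      ∣ Polynomial.aeval (Polynomial.X + Polynomial.C a) (aeval ![Polynomial.X, p] Q) := by
    rw [← hshift]
    refine pow_dvd_aeval (fun i => ?_) fun d hd => ha d ?_
    · fin_cases i
      · exact dvd_rfl
      · simp [Polynomial.X_dvd_iff, Polynomial.coeff_zero_eq_eval_zero]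
    · rwa [Finsupp.degree_eq_sum, Fin.sum_univ_two] at hd
  have h := map_dvd (Polynomial.aeval (Polynomial.X - Polynomial.C a)) hX
  rwa [map_pow, Polynomial.aeval_X, ← Polynomial.comp_eq_aeval, ← Polynomial.comp_eq_aeval,
    Polynomial.comp_assoc, Polynomial.add_comp, Polynomial.X_comp, Polynomial.C_comp,
    sub_add_cancel, Polynomial.comp_X] at h

end Bivariate

theorem stmt_9_general {F : Type*} [Field F] {k D m : ℕ}
    (Q : MvPolynomial (Fin 2) F)
    (hD : MvPolynomial.weightedTotalDegree ![1, k - 1] Q ≤ D)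
    (p : Polynomial F) (hp : p.natDegree ≤ k - 1) (hm : 1 ≤ m)
    (A : Finset F)
    (hA : ∀ a ∈ A, ∀ d : Fin 2 →₀ ℕ, d 0 + d 1 < m →
      MvPolynomial.coeff d
        (MvPolynomial.aeval
          ![MvPolynomial.X 0 + MvPolynomial.C a,
            MvPolynomial.X 1 + MvPolynomial.C (p.eval a)] Q) = 0)
    (hcard : (D : ℝ) / m < A.card) :
    (MvPolynomial.X 1 - Polynomial.aeval (MvPolynomial.X 0) p) ∣ Q := by
  refine MvPolynomial.X_one_sub_dvd_of_aeval_eq_zero (by_contra fun hq => ?_)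
  have hroots := mul_card_le_natDegree hq fun a ha => MvPolynomial.X_sub_C_pow_dvd_aeval (hA a ha)
  have hdeg : (MvPolynomial.aeval ![X, p] Q).natDegree ≤ D := by
    refine (MvPolynomial.natDegree_aeval_le_weightedTotalDegree (fun i => ?_) Q).trans hD
    fin_cases i
    · exact natDegree_X_le
    · exact hp
  rw [div_lt_iff₀ (by exact_mod_cast hm)] at hcard
  have : (m * A.card : ℝ) ≤ D := by exact_mod_cast hroots.trans hdeg
  linarith

/-- Multiplicity Bézout-type lemma: if a nonzero `Q` of `(1,k-1)`-weighted degree at most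
`D` has roots of multiplicity at least `m` at `(a, p a)` for all `a` in a set `A` with
`|A| > D/m`, where `deg p ≤ k-1`, then `Y - p(X)` divides `Q`. -/
theorem stmt_9 {F : Type*} [Field F] {k D m : ℕ}
    (Q : MvPolynomial (Fin 2) F) (hQ : Q ≠ 0)
    (hD : MvPolynomial.weightedTotalDegree ![1, k - 1] Q ≤ D)
    (p : Polynomial F) (hp : p.natDegree ≤ k - 1) (hm : 1 ≤ m)
    (A : Finset F)
    (hA : ∀ a ∈ A, ∀ d : Fin 2 →₀ ℕ, d 0 + d 1 < m →
      MvPolynomial.coeff d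
        (MvPolynomial.aeval
          ![MvPolynomial.X 0 + MvPolynomial.C a,
            MvPolynomial.X 1 + MvPolynomial.C (p.eval a)] Q) = 0)
    (hcard : (D : ℝ) / m < A.card) :
    (MvPolynomial.X 1 - Polynomial.aeval (MvPolynomial.X 0) p) ∣ Q :=
  stmt_9_general Q hD p hp hm A hA hcard
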